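/- Asymptotics of the inverse of J_μ(coth(tS_μ/2) − I): Let m ≥ 1, let A ∈ M_m(ℝ) be symmetric and invertible, and fix t ∈ ℝ \ {0}. Then there exist constants C > 0 and δ > 0 such that for every invertible skew-symmetric matrix J_μ ∈ M_m(ℝ) with ‖J_μ‖ < δ, setting S_μ := -A J_μ, the matrix sinh(t S_μ/2) is invertible, the matrix J_μ( coth(t S_μ/2) − I ) is invertible, and ‖ ( J_μ( coth(t S_μ/2) − I ) )⁻¹ + (t/2) A ‖ ≤ C ‖J_μ‖. -/

import Mathlib

open Matrix

/-- Matrix hyperbolic sine, via the matrix exponential. -/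
noncomputable def msinh {m : ℕ} (M : Matrix (Fin m) (Fin m) ℝ) : Matrix (Fin m) (Fin m) ℝ :=
  (2⁻¹ : ℝ) • (NormedSpace.exp M - NormedSpace.exp (-M))

/-- Matrix hyperbolic cosine, via the matrix exponential. -/
noncomputable def mcosh {m : ℕ} (M : Matrix (Fin m) (Fin m) ℝ) : Matrix (Fin m) (Fin m) ℝ :=
  (2⁻¹ : ℝ) • (NormedSpace.exp M + NormedSpace.exp (-M))

/-- Matrix hyperbolic cotangent `coth M = cosh M · (sinh M)⁻¹`. -/
noncomputable def mcoth {m : ℕ} (M : Matrix (Fin m) (Fin m) ℝ) : Matrix (Fin m) (Fin m) ℝ :=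
  mcosh M * (msinh M)⁻¹

/-- The operator norm of a real matrix acting on Euclidean space. -/
noncomputable def matOpNorm {m : ℕ} (M : Matrix (Fin m) (Fin m) ℝ) : ℝ :=
  ‖LinearMap.toContinuousLinearMap (Matrix.toEuclideanLin M)‖

/-!
With `X = t S_μ = -t A J_μ`, one has `sinh(X/2) e^{X/2} = (e^X - 1)/2` and
`coth(X/2) - 1 = e^{-X/2} sinh(X/2)⁻¹`, so the inverse of `J_μ(coth(X/2) - 1)` is
`(e^X - 1) J_μ⁻¹ / 2`. Factoring `e^X - 1 = (1 + R(X)) X` with `‖R(X)‖ ≤ 2‖X‖` and using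
`X J_μ⁻¹ = -t A`, this inverse is `-(t/2)(1 + R(X)) A`, at distance at most `t² ‖A‖² ‖J_μ‖`
from `-(t/2) A`; for `‖X‖ < 1/2` the factor `1 + R(X)` is invertible, hence so is `sinh(X/2)`.
-/

open NormedSpace
open scoped Nat

section Exponential

variable {𝔸 : Type*} [NormedRing 𝔸] [NormedAlgebra ℝ 𝔸]

/-- The power series of `(exp X - 1 - X) X⁻¹`. -/
noncomputable def expTail (X : 𝔸) : 𝔸 := ∑' n : ℕ, ((n + 2)! : ℝ)⁻¹ • X ^ (n + 1)

theorem norm_expTail_term_le (X : 𝔸) (n : ℕ) :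
    ‖((n + 2)! : ℝ)⁻¹ • X ^ (n + 1)‖ ≤ ‖X‖ ^ (n + 1) / (n + 1)! := by
  rw [norm_smul, norm_inv, Real.norm_natCast, div_eq_inv_mul]
  gcongr
  · norm_num
  · exact norm_pow_le' X n.succ_pos

theorem summable_norm_expTail_term (X : 𝔸) :
    Summable fun n : ℕ => ‖((n + 2)! : ℝ)⁻¹ • X ^ (n + 1)‖ :=
  .of_nonneg_of_le (fun _ => norm_nonneg _) (norm_expTail_term_le X)
    ((summable_nat_add_iff 1).2 (Real.summable_pow_div_factorial ‖X‖))

theorem norm_expTail_le (X : 𝔸) : ‖expTail X‖ ≤ Real.exp ‖X‖ - 1 := by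
  have hexp : Real.exp ‖X‖ - 1 = ∑' n : ℕ, ‖X‖ ^ (n + 1) / (n + 1)! := by
    rw [Real.exp_eq_exp_ℝ, exp_eq_tsum_div]
    beta_reduce
    rw [(Real.summable_pow_div_factorial _).tsum_eq_zero_add]
    simp
  rw [hexp]
  exact (norm_tsum_le_tsum_norm (summable_norm_expTail_term X)).trans
    ((summable_norm_expTail_term X).tsum_le_tsum (norm_expTail_term_le X)
      ((summable_nat_add_iff 1).2 (Real.summable_pow_div_factorial ‖X‖)))

theorem norm_expTail_le_two_mul {X : 𝔸} (hX : ‖X‖ ≤ 1) : ‖expTail X‖ ≤ 2 * ‖X‖ := by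
  have h := Real.abs_exp_sub_one_le (x := ‖X‖) (by rwa [abs_norm])
  rw [abs_norm] at h
  exact (norm_expTail_le X).trans ((le_abs_self _).trans h)

theorem norm_smul_neg_mul_le (t : ℝ) (A J : 𝔸) : ‖t • (-A * J)‖ ≤ |t| * ‖A‖ * ‖J‖ := by
  rw [norm_smul, Real.norm_eq_abs, mul_assoc, ← norm_neg A]
  gcongr
  exact norm_mul_le _ _

variable [CompleteSpace 𝔸]

theorem hasSum_expTail (X : 𝔸) :
    HasSum (fun n : ℕ => ((n + 2)! : ℝ)⁻¹ • X ^ (n + 1)) (expTail X) :=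
  (summable_norm_expTail_term X).of_norm.hasSum

theorem commute_expTail (X : 𝔸) : Commute X (expTail X) := by
  refine ((hasSum_expTail X).mul_left X).unique ?_
  simpa only [mul_smul_comm, smul_mul_assoc, ← pow_succ, ← pow_succ'] using
    (hasSum_expTail X).mul_right X

theorem exp_eq_one_add_mul_one_add_expTail (X : 𝔸) :
    exp X = 1 + X * (1 + expTail X) := by
  have hs : Summable fun n : ℕ => ((n ! : ℝ))⁻¹ • X ^ n := expSeries_summable' (𝕂 := ℝ) X
  rw [exp_eq_tsum ℝ]
  beta_reduce
  rw [← hs.sum_add_tsum_nat_add 2, mul_add, mul_one, ← ((hasSum_expTail X).mul_left X).tsum_eq]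
  simp [Finset.sum_range_succ, add_assoc, ← pow_succ']

theorem isUnit_exp_sub_one {X : 𝔸} (hX : IsUnit X) (hsmall : ‖X‖ < 2⁻¹) :
    IsUnit (exp X - 1) := by
  have htail : ‖-expTail X‖ < 1 := by
    rw [norm_neg]
    linarith [norm_expTail_le_two_mul (X := X) (by linarith)]
  rw [exp_eq_one_add_mul_one_add_expTail, add_sub_cancel_left]
  simpa using hX.mul (Units.oneSub _ htail).isUnit

end Exponential

section Hyperbolic

variable {m : ℕ}

theorem msinh_mul_exp (M : Matrix (Fin m) (Fin m) ℝ) :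
    msinh M * exp M = (2⁻¹ : ℝ) • (exp ((2 : ℝ) • M) - 1) := by
  rw [msinh, smul_mul_assoc, sub_mul, ← Matrix.exp_add_of_commute _ _ (Commute.refl M),
    ← Matrix.exp_add_of_commute _ _ (Commute.refl M).neg_left, neg_add_cancel, two_smul,
    NormedSpace.exp_zero]

theorem isUnit_msinh_iff {M : Matrix (Fin m) (Fin m) ℝ} :
    IsUnit (msinh M) ↔ IsUnit (exp ((2 : ℝ) • M) - 1) := by
  rw [← (Matrix.isUnit_exp M).mul_right_iff, msinh_mul_exp, Algebra.smul_def,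
    (((inv_ne_zero two_ne_zero).isUnit).map (algebraMap ℝ _)).mul_left_iff]

theorem mcoth_sub_one {M : Matrix (Fin m) (Fin m) ℝ} (h : IsUnit (msinh M)) :
    mcoth M - 1 = exp (-M) * (msinh M)⁻¹ := by
  have hcs : mcosh M - msinh M = exp (-M) := by
    rw [mcosh, msinh]
    module
  rw [mcoth, ← hcs, sub_mul, Matrix.mul_nonsing_inv _ ((Matrix.isUnit_iff_isUnit_det _).1 h)]

theorem isUnit_mul_mcoth_sub_one {J M : Matrix (Fin m) (Fin m) ℝ} (hJ : IsUnit J)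
    (h : IsUnit (msinh M)) : IsUnit (J * (mcoth M - 1)) := by
  rw [mcoth_sub_one h]
  exact hJ.mul ((Matrix.isUnit_exp _).mul (Matrix.isUnit_nonsing_inv_iff.2 h))

theorem inv_mul_mcoth_sub_one {J M : Matrix (Fin m) (Fin m) ℝ} (h : IsUnit (msinh M)) :
    (J * (mcoth M - 1))⁻¹ = (2⁻¹ : ℝ) • ((exp ((2 : ℝ) • M) - 1) * J⁻¹) := by
  rw [mcoth_sub_one h, Matrix.mul_inv_rev, Matrix.mul_inv_rev, Matrix.exp_neg,
    Matrix.nonsing_inv_nonsing_inv _ ((Matrix.isUnit_iff_isUnit_det _).1 h),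
    Matrix.nonsing_inv_nonsing_inv _ ((Matrix.isUnit_iff_isUnit_det _).1 (Matrix.isUnit_exp M)),
    msinh_mul_exp, smul_mul_assoc]

end Hyperbolic

section OperatorNorm

open scoped Matrix.Norms.L2Operator

variable {m : ℕ}

theorem matOpNorm_eq_norm (M : Matrix (Fin m) (Fin m) ℝ) : matOpNorm M = ‖M‖ := rfl

theorem exp_sub_one_mul_inv {J : Matrix (Fin m) (Fin m) ℝ} (hJ : IsUnit J)
    (A : Matrix (Fin m) (Fin m) ℝ) (t : ℝ) :
    (exp (t • (-A * J)) - 1) * J⁻¹ = -t • ((1 + expTail (t • (-A * J))) * A) := by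
  have hXJ : t • (-A * J) * J⁻¹ = -t • A := by
    rw [smul_mul_assoc, mul_assoc, Matrix.mul_nonsing_inv _ ((Matrix.isUnit_iff_isUnit_det _).1 hJ),
      mul_one, neg_smul, smul_neg]
  rw [exp_eq_one_add_mul_one_add_expTail, add_sub_cancel_left,
    ((Commute.one_right _).add_right (commute_expTail _)).eq, mul_assoc, hXJ, mul_smul_comm]

theorem isUnit_msinh_half_smul {t : ℝ} {A J : Matrix (Fin m) (Fin m) ℝ} (ht : t ≠ 0)
    (hA : IsUnit A) (hJ : IsUnit J) (hsmall : ‖t • (-A * J)‖ < 2⁻¹) :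
    IsUnit (msinh ((t / 2) • (-A * J))) := by
  rw [isUnit_msinh_iff, smul_smul, mul_div_cancel₀ _ two_ne_zero]
  refine isUnit_exp_sub_one ?_ hsmall
  rw [Algebra.smul_def]
  exact (ht.isUnit.map _).mul (hA.neg.mul hJ)

theorem inv_mul_mcoth_sub_one_add_half_smul {t : ℝ} {A J : Matrix (Fin m) (Fin m) ℝ}
    (hJ : IsUnit J) (h : IsUnit (msinh ((t / 2) • (-A * J)))) :
    (J * (mcoth ((t / 2) • (-A * J)) - 1))⁻¹ + (t / 2) • A =
      -(t / 2) • (expTail (t • (-A * J)) * A) := by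
  rw [inv_mul_mcoth_sub_one h, smul_smul, mul_div_cancel₀ _ two_ne_zero, exp_sub_one_mul_inv hJ,
    add_mul, one_mul]
  module

end OperatorNorm

open scoped Matrix.Norms.L2Operator in
theorem inverse_coth_asymptotics_general
    (m : ℕ) (A : Matrix (Fin m) (Fin m) ℝ) (hAunit : IsUnit A)
    (t : ℝ) (ht : t ≠ 0) :
    ∃ C > (0 : ℝ), ∃ δ > (0 : ℝ), ∀ Jμ : Matrix (Fin m) (Fin m) ℝ,
      Jμᵀ = -Jμ → IsUnit Jμ → matOpNorm Jμ < δ →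
        IsUnit (msinh ((t / 2) • (-A * Jμ))) ∧
        IsUnit (Jμ * (mcoth ((t / 2) • (-A * Jμ)) - 1)) ∧
        matOpNorm ((Jμ * (mcoth ((t / 2) • (-A * Jμ)) - 1))⁻¹ + (t / 2) • A) ≤
          C * matOpNorm Jμ := by
  refine ⟨t ^ 2 * ‖A‖ ^ 2 + 1, by positivity, (2 * (|t| * ‖A‖ + 1))⁻¹, by positivity, ?_⟩
  intro J _ hJ hJδ
  simp only [matOpNorm_eq_norm] at hJδ ⊢
  have hXnorm := norm_smul_neg_mul_le t A J
  have hXsmall : ‖t • (-A * J)‖ < 2⁻¹ := by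
    have := mul_lt_mul_of_pos_left hJδ (by positivity : (0 : ℝ) < 2 * (|t| * ‖A‖ + 1))
    rw [mul_inv_cancel₀ (by positivity)] at this
    nlinarith [norm_nonneg J]
  have hsinh := isUnit_msinh_half_smul ht hAunit hJ hXsmall
  refine ⟨hsinh, isUnit_mul_mcoth_sub_one hJ hsinh, ?_⟩
  rw [inv_mul_mcoth_sub_one_add_half_smul hJ hsinh, norm_smul, Real.norm_eq_abs, abs_neg,
    abs_div, abs_two]
  calc |t| / 2 * ‖expTail (t • (-A * J)) * A‖
      ≤ |t| / 2 * (2 * ‖t • (-A * J)‖ * ‖A‖) := by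
        gcongr
        exact (norm_mul_le _ _).trans (by gcongr; exact norm_expTail_le_two_mul (by linarith))
    _ ≤ |t| / 2 * (2 * (|t| * ‖A‖ * ‖J‖) * ‖A‖) := by gcongr
    _ ≤ (t ^ 2 * ‖A‖ ^ 2 + 1) * ‖J‖ := by
        rw [← sq_abs t]
        nlinarith [norm_nonneg J]

/-- **Asymptotics of the inverse of `J_μ(coth(tS_μ/2) − I)`:** for `A` symmetric invertible
and `t ≠ 0`, for all invertible skew-symmetric `J_μ` small enough, with `S_μ = -A J_μ`,
the matrix `J_μ(coth(tS_μ/2) − I)` is invertible and its inverse is `-(t/2)A + O(‖J_μ‖)`. -/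
theorem inverse_coth_asymptotics
    (m : ℕ) (hm : 1 ≤ m) (A : Matrix (Fin m) (Fin m) ℝ) (hA : A.IsSymm) (hAunit : IsUnit A)
    (t : ℝ) (ht : t ≠ 0) :
    ∃ C > (0 : ℝ), ∃ δ > (0 : ℝ), ∀ Jμ : Matrix (Fin m) (Fin m) ℝ,
      Jμᵀ = -Jμ → IsUnit Jμ → matOpNorm Jμ < δ →
        IsUnit (msinh ((t / 2) • (-A * Jμ))) ∧
        IsUnit (Jμ * (mcoth ((t / 2) • (-A * Jμ)) - 1)) ∧
        matOpNorm ((Jμ * (mcoth ((t / 2) • (-A * Jμ)) - 1))⁻¹ + (t / 2) • A) ≤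
          C * matOpNorm Jμ :=
  inverse_coth_asymptotics_general m A hAunit t ht
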